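/- (Partial overdamping of the high-loss spectrum) Assume θ = 0 and rank R < N. If β > 2·ω_max/b_min, then every ζ ∈ σ(A(β)) that lies in one of the high-loss discs — i.e. satisfies |ζ + iβb| ≤ ω_max for some nonzero eigenvalue b of B — is purely imaginary: Re ζ = 0. Equivalently, every ζ ∈ σ(A(β)) with −Im ζ > ω_max satisfies Re ζ = 0. -/

import Mathlib

open Matrix
open scoped ComplexOrder

noncomputable section

variable {N : ℕ}

/-- A real matrix viewed as a complex matrix. -/
def cm (M : Matrix (Fin N) (Fin N) ℝ) : Matrix (Fin N) (Fin N) ℂ :=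
  M.map Complex.ofReal

/-- The quadratic matrix pencil `C(ζ,β) = ζ²α + iζ(2θ + βR) − η`. -/
def pencil (α η θ R : Matrix (Fin N) (Fin N) ℝ) (β : ℝ) (ζ : ℂ) :
    Matrix (Fin N) (Fin N) ℂ :=
  ζ ^ 2 • cm α + (Complex.I * ζ) • ((2 : ℂ) • cm θ + (β : ℂ) • cm R) - cm η

/-- The former Mathlib `Matrix.PosSemidef.sqrt` (removed), with its old definition. -/
def psdSqrt {M : Matrix (Fin N) (Fin N) ℂ} (hM : M.PosSemidef) : Matrix (Fin N) (Fin N) ℂ :=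
  (hM.1.eigenvectorUnitary : Matrix (Fin N) (Fin N) ℂ) *
    diagonal ((↑) ∘ Real.sqrt ∘ hM.1.eigenvalues) *
    (star hM.1.eigenvectorUnitary : Matrix (Fin N) (Fin N) ℂ)

/-- `K_p = (√α)⁻¹`. -/
def Kp {α : Matrix (Fin N) (Fin N) ℝ} (hα : (cm α).PosDef) : Matrix (Fin N) (Fin N) ℂ :=
  (psdSqrt hα.posSemidef)⁻¹

/-- `Φ = √η · K_p`. -/
def Phi {α η : Matrix (Fin N) (Fin N) ℝ} (hα : (cm α).PosDef) (hη : (cm η).PosSemidef) :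
    Matrix (Fin N) (Fin N) ℂ :=
  psdSqrt hη * Kp hα

/-- `R̃ = K_p R K_p`. -/
def Rt (R : Matrix (Fin N) (Fin N) ℝ) {α : Matrix (Fin N) (Fin N) ℝ} (hα : (cm α).PosDef) :
    Matrix (Fin N) (Fin N) ℂ :=
  Kp hα * cm R * Kp hα

/-- `Ω_p = −2i K_p θ K_p`. -/
def Omp (θ : Matrix (Fin N) (Fin N) ℝ) {α : Matrix (Fin N) (Fin N) ℝ} (hα : (cm α).PosDef) :
    Matrix (Fin N) (Fin N) ℂ :=
  ((-2 : ℂ) * Complex.I) • (Kp hα * cm θ * Kp hα)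

/-- `Ω = [[Ω_p, −iΦᵀ],[iΦ, 0]]`. -/
def Om (θ : Matrix (Fin N) (Fin N) ℝ) {α η : Matrix (Fin N) (Fin N) ℝ}
    (hα : (cm α).PosDef) (hη : (cm η).PosSemidef) :
    Matrix (Fin N ⊕ Fin N) (Fin N ⊕ Fin N) ℂ :=
  fromBlocks (Omp θ hα) ((-Complex.I) • (Phi hα hη)ᵀ) (Complex.I • Phi hα hη) 0

/-- `B = [[R̃, 0],[0, 0]]`. -/
def Bm (R : Matrix (Fin N) (Fin N) ℝ) {α : Matrix (Fin N) (Fin N) ℝ} (hα : (cm α).PosDef) :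
    Matrix (Fin N ⊕ Fin N) (Fin N ⊕ Fin N) ℂ :=
  fromBlocks (Rt R hα) 0 0 0

/-- The system operator `A(β) = Ω − iβB`. -/
def Asys (θ R : Matrix (Fin N) (Fin N) ℝ) {α η : Matrix (Fin N) (Fin N) ℝ}
    (hα : (cm α).PosDef) (hη : (cm η).PosSemidef) (β : ℝ) :
    Matrix (Fin N ⊕ Fin N) (Fin N ⊕ Fin N) ℂ :=
  Om θ hα hη - (Complex.I * (β : ℂ)) • Bm R hα

/-- The ℓ²→ℓ² operator norm of a complex matrix. -/
def opN {n : Type*} [Fintype n] [DecidableEq n] (M : Matrix n n ℂ) : ℝ :=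
  ‖Matrix.toEuclideanCLM (𝕜 := ℂ) M‖

/-- `ω_max = ‖Ω‖`. -/
def omegaMax (θ : Matrix (Fin N) (Fin N) ℝ) {α η : Matrix (Fin N) (Fin N) ℝ}
    (hα : (cm α).PosDef) (hη : (cm η).PosSemidef) : ℝ :=
  opN (Om θ hα hη)

/-- `b_min`, the smallest nonzero eigenvalue of `B`. -/
def bMin (R : Matrix (Fin N) (Fin N) ℝ) {α : Matrix (Fin N) (Fin N) ℝ} (hα : (cm α).PosDef) : ℝ :=
  sInf {r : ℝ | r ≠ 0 ∧ (r : ℂ) ∈ spectrum ℂ (Bm R hα)}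

/-!
Let `(u, v)` be an eigenvector of `A(β)` for an eigenvalue `ζ ≠ 0`. Eliminating `v` from the block
equations gives `ζ² u + iβζ R̃ u = Φᴴ Φ u`, and pairing with `u` gives
`ζ² ‖u‖² + iβζ ⟪u, R̃ u⟫ = ‖Φ u‖²` with `⟪u, R̃ u⟫` real. The imaginary part reads
`Re ζ · (2 Im ζ ‖u‖² + β ⟪u, R̃ u⟫) = 0`; if `Re ζ ≠ 0`, substituting into the real part gives
`|ζ|² ‖u‖² = ‖Φ u‖² ≤ ω_max² ‖u‖²`. So an eigenvalue off the imaginary axis lies in the disc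
`|ζ| ≤ ω_max`, which misses the half-plane `-Im ζ > ω_max` and, as `βb > 2 ω_max`, every
high-loss disc.
-/

open Complex WithLp

namespace Matrix

theorem star_dotProduct_self_eq_norm_sq {n : Type*} [Fintype n] (x : n → ℂ) :
    star x ⬝ᵥ x = ((‖toLp 2 x‖ ^ 2 : ℝ) : ℂ) := by
  rw [ofReal_pow, dotProduct_comm]
  exact inner_self_eq_norm_sq_to_K (𝕜 := ℂ) (toLp 2 x)

variable {n : Type*} [Fintype n] [DecidableEq n]

theorem exists_mulVec_eq_smul_of_mem_spectrum {M : Matrix n n ℂ} {ζ : ℂ}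
    (h : ζ ∈ spectrum ℂ M) : ∃ x ≠ 0, M *ᵥ x = ζ • x := by
  rw [← spectrum_toLin', ← Module.End.hasEigenvalue_iff_mem_spectrum] at h
  obtain ⟨x, hx, hx0⟩ := h.exists_hasEigenvector
  exact ⟨x, hx0, by simpa using Module.End.mem_eigenspace_iff.mp hx⟩

theorem norm_toLp_mulVec_le (M : Matrix n n ℂ) (x : n → ℂ) :
    ‖toLp 2 (M *ᵥ x)‖ ≤ opN M * ‖toLp 2 x‖ :=
  (toEuclideanCLM (𝕜 := ℂ) M).le_opNorm (toLp 2 x)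

end Matrix

theorem EuclideanSpace.norm_sq_toLp_sumElim {m n : Type*} [Fintype m] [Fintype n]
    (u : m → ℂ) (v : n → ℂ) :
    ‖toLp 2 (Sum.elim u v)‖ ^ 2 = ‖toLp 2 u‖ ^ 2 + ‖toLp 2 v‖ ^ 2 := by
  simp [EuclideanSpace.norm_sq_eq, Fintype.sum_sum_type]

theorem Complex.re_eq_zero_or_norm_sq_mul_eq {ζ : ℂ} {c n r s : ℝ}
    (h : ζ ^ 2 * n + I * c * ζ * r = s) : ζ.re = 0 ∨ ‖ζ‖ ^ 2 * n = s := by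
  have hre := congrArg re h
  have him := congrArg im h
  simp only [add_re, add_im, mul_re, mul_im, ofReal_re, ofReal_im, I_re, I_im, sq] at hre him
  have him' : ζ.re * (2 * ζ.im * n + c * r) = 0 := by linear_combination him
  refine (mul_eq_zero.mp him').imp_right fun hcr => ?_
  rw [← normSq_eq_norm_sq, normSq_apply]
  linear_combination hre + ζ.im * hcr

theorem Matrix.PosSemidef.fromBlocks_zero {𝕜 : Type*} [RCLike 𝕜] {m n : Type*} [Fintype m]
    [Fintype n] [DecidableEq n] {A : Matrix n n 𝕜} (hA : A.PosSemidef) :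
    (fromBlocks A 0 0 (0 : Matrix m m 𝕜)).PosSemidef := by
  convert hA.conjTranspose_mul_mul_same (fromCols (1 : Matrix n n 𝕜) (0 : Matrix n m 𝕜)) using 1
  ext (i | i) (j | j) <;>
    simp [conjTranspose_fromCols_eq_fromRows_conjTranspose, fromRows_mul, mul_fromCols]

theorem Matrix.PosSemidef.pos_of_mem_spectrum {𝕜 : Type*} [RCLike 𝕜] {n : Type*} [Fintype n]
    [DecidableEq n] {A : Matrix n n 𝕜} (hA : A.PosSemidef) {b : ℝ} (hb0 : b ≠ 0)
    (hb : (b : 𝕜) ∈ spectrum 𝕜 A) : 0 < b := by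
  have hb_nonneg : 0 ≤ (b : 𝕜) := (posSemidef_iff_isHermitian_and_spectrum_nonneg.mp hA).2 hb
  exact (RCLike.ofReal_nonneg.mp hb_nonneg).lt_of_ne hb0.symm

section Blocks

variable {m n : Type*} [Fintype m] [Fintype n] [DecidableEq m] [DecidableEq n]

theorem Matrix.norm_toLp_mulVec_le_opN_fromBlocks (A : Matrix n n ℂ) (B : Matrix n m ℂ)
    (C : Matrix m n ℂ) (D : Matrix m m ℂ) (u : n → ℂ) :
    ‖toLp 2 (C *ᵥ u)‖ ≤ opN (fromBlocks A B C D) * ‖toLp 2 u‖ := by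
  have h := norm_toLp_mulVec_le (fromBlocks A B C D) (Sum.elim u 0)
  have hu : ‖toLp 2 (Sum.elim u (0 : m → ℂ))‖ = ‖toLp 2 u‖ := by
    rw [← sq_eq_sq₀ (norm_nonneg _) (norm_nonneg _), EuclideanSpace.norm_sq_toLp_sumElim]
    simp
  have hCu : ‖toLp 2 (C *ᵥ u)‖ ≤ ‖toLp 2 (Sum.elim (A *ᵥ u) (C *ᵥ u))‖ := by
    rw [← pow_le_pow_iff_left₀ (norm_nonneg _) (norm_nonneg _) two_ne_zero,
      EuclideanSpace.norm_sq_toLp_sumElim]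
    exact le_add_of_nonneg_left (sq_nonneg _)
  rw [fromBlocks_mulVec, hu] at h
  simp only [Sum.elim_comp_inl, Sum.elim_comp_inr, mulVec_zero, add_zero] at h
  exact hCu.trans h

-- With `u = √α x` and `θ = 0`, this pencil is `K_p C(ζ,β) K_p`.
theorem Matrix.exists_ne_zero_pencil_mulVec_eq_zero (Φ : Matrix m n ℂ) (D : Matrix n n ℂ) (c : ℝ)
    {ζ : ℂ} (hζ0 : ζ ≠ 0) (hζ : ζ ∈ spectrum ℂ (fromBlocks (-(I * c) • D) (-I • Φᴴ) (I • Φ) 0)) :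
    ∃ u ≠ 0, (ζ ^ 2 • 1 + (I * c * ζ) • D - Φᴴ * Φ) *ᵥ u = 0 := by
  obtain ⟨x, hx0, hx⟩ := exists_mulVec_eq_smul_of_mem_spectrum hζ
  set u := x ∘ Sum.inl
  set v := x ∘ Sum.inr
  have h₁ : -(I * c) • (D *ᵥ u) - I • (Φᴴ *ᵥ v) = ζ • u := funext fun i => by
    simpa [fromBlocks_mulVec, smul_mulVec, neg_mulVec, u, v, sub_eq_add_neg] using
      congrFun hx (Sum.inl i)
  have h₂ : I • (Φ *ᵥ u) = ζ • v := funext fun i => by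
    simpa [fromBlocks_mulVec, smul_mulVec, u, v] using congrFun hx (Sum.inr i)
  have hu0 : u ≠ 0 := by
    intro hu
    have hv : v = 0 := by simpa [hu, hζ0] using h₂.symm
    exact hx0 (funext fun | .inl i => congrFun hu i | .inr i => congrFun hv i)
  refine ⟨u, hu0, ?_⟩
  have h₂' : I • (Φᴴ *ᵥ Φ *ᵥ u) = ζ • (Φᴴ *ᵥ v) := by
    rw [← mulVec_smul, h₂, mulVec_smul]
  have hI : (I * I) • (Φᴴ *ᵥ Φ *ᵥ u) = -(Φᴴ *ᵥ Φ *ᵥ u) := by simp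
  rw [sub_mulVec, add_mulVec, smul_mulVec, smul_mulVec, one_mulVec, ← mulVec_mulVec]
  linear_combination (norm := module) (-ζ) • h₁ + I • h₂' - hI

theorem Matrix.re_eq_zero_or_norm_le_opN_of_mem_spectrum (Φ : Matrix m n ℂ) {D : Matrix n n ℂ}
    (hD : D.IsHermitian) (c : ℝ) {ζ : ℂ}
    (hζ : ζ ∈ spectrum ℂ (fromBlocks (-(I * c) • D) (-I • Φᴴ) (I • Φ) 0)) :
    ζ.re = 0 ∨ ‖ζ‖ ≤ opN (fromBlocks (0 : Matrix n n ℂ) (-I • Φᴴ) (I • Φ) 0) := by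
  rcases eq_or_ne ζ 0 with rfl | hζ0
  · simp
  obtain ⟨u, hu0, hu⟩ := exists_ne_zero_pencil_mulVec_eq_zero Φ D c hζ0 hζ
  have hDu : star u ⬝ᵥ D *ᵥ u = ((star u ⬝ᵥ D *ᵥ u).re : ℂ) :=
    Complex.ext rfl (by simpa using hD.im_star_dotProduct_mulVec_self u)
  have hquad : ζ ^ 2 * (‖toLp 2 u‖ ^ 2 : ℝ) + I * c * ζ * (star u ⬝ᵥ D *ᵥ u).re =
      (‖toLp 2 (Φ *ᵥ u)‖ ^ 2 : ℝ) := by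
    have h := congrArg (star u ⬝ᵥ ·) hu
    simp only [sub_mulVec, add_mulVec, smul_mulVec, one_mulVec, ← mulVec_mulVec, dotProduct_sub,
      dotProduct_add, dotProduct_smul, dotProduct_zero, smul_eq_mul] at h
    rw [← hDu, ← star_dotProduct_self_eq_norm_sq, ← star_dotProduct_self_eq_norm_sq, star_mulVec,
      ← dotProduct_mulVec]
    linear_combination h
  refine (re_eq_zero_or_norm_sq_mul_eq hquad).imp_right fun heq => ?_
  have hbound := norm_toLp_mulVec_le_opN_fromBlocks 0 (-I • Φᴴ) (I • Φ) 0 u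
  rw [smul_mulVec, toLp_smul, norm_smul, norm_I, one_mul] at hbound
  have hu_pos : 0 < ‖toLp 2 u‖ := norm_pos_iff.mpr (by simpa using hu0)
  have hζu : ‖ζ‖ * ‖toLp 2 u‖ = ‖toLp 2 (Φ *ᵥ u)‖ := by
    rw [← sq_eq_sq₀ (by positivity) (norm_nonneg _), mul_pow, heq]
  exact le_of_mul_le_mul_right (hζu.trans_le hbound) hu_pos

end Blocks

section PsdSqrt

open scoped MatrixOrder

variable {A : Matrix (Fin N) (Fin N) ℂ}

theorem psdSqrt_eq_cfcSqrt (hA : A.PosSemidef) : psdSqrt hA = CFC.sqrt A := by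
  rw [CFC.sqrt_eq_real_sqrt A hA.nonneg, cfcₙ_eq_cfc, hA.1.cfc_eq]
  simp [IsHermitian.cfc, psdSqrt, Function.comp_def]

theorem psdSqrt_isHermitian (hA : A.PosSemidef) : (psdSqrt hA).IsHermitian := by
  rw [psdSqrt_eq_cfcSqrt]
  exact (CFC.sqrt_nonneg A).posSemidef.isHermitian

theorem psdSqrt_transpose (hA : A.PosSemidef) (hAt : Aᵀ = A) : (psdSqrt hA)ᵀ = psdSqrt hA := by
  rw [psdSqrt_eq_cfcSqrt]
  refine (CFC.sqrt_unique ?_ (CFC.sqrt_nonneg A).posSemidef.transpose.nonneg).symm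
  rw [← transpose_mul, CFC.sqrt_mul_sqrt_self A hA.nonneg, hAt]

end PsdSqrt

theorem cm_transpose_eq_conjTranspose (M : Matrix (Fin N) (Fin N) ℝ) : (cm M)ᵀ = (cm M)ᴴ := by
  ext i j
  simp [cm]

theorem Kp_isHermitian {α : Matrix (Fin N) (Fin N) ℝ} (hα : (cm α).PosDef) : (Kp hα).IsHermitian :=
  (psdSqrt_isHermitian _).inv

theorem psdSqrt_cm_transpose {M : Matrix (Fin N) (Fin N) ℝ} (hM : (cm M).PosSemidef) :
    (psdSqrt hM)ᵀ = psdSqrt hM :=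
  psdSqrt_transpose hM ((cm_transpose_eq_conjTranspose M).trans hM.isHermitian)

theorem Kp_transpose {α : Matrix (Fin N) (Fin N) ℝ} (hα : (cm α).PosDef) : (Kp hα)ᵀ = Kp hα := by
  rw [Kp, transpose_nonsing_inv, psdSqrt_cm_transpose]

theorem Phi_transpose {α η : Matrix (Fin N) (Fin N) ℝ} (hα : (cm α).PosDef)
    (hη : (cm η).PosSemidef) : (Phi hα hη)ᵀ = (Phi hα hη)ᴴ := by
  rw [Phi, transpose_mul, conjTranspose_mul, Kp_transpose, (Kp_isHermitian hα).eq,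
    psdSqrt_cm_transpose, (psdSqrt_isHermitian hη).eq]

theorem Rt_isHermitian {R α : Matrix (Fin N) (Fin N) ℝ} (hR : (cm R).IsHermitian)
    (hα : (cm α).PosDef) : (Rt R hα).IsHermitian := by
  simpa [Rt, (Kp_isHermitian hα).eq] using isHermitian_conjTranspose_mul_mul (Kp hα) hR

theorem Bm_posSemidef {R α : Matrix (Fin N) (Fin N) ℝ} (hR : (cm R).PosSemidef)
    (hα : (cm α).PosDef) : (Bm R hα).PosSemidef := by
  refine PosSemidef.fromBlocks_zero ?_
  simpa [Rt, (Kp_isHermitian hα).eq] using hR.conjTranspose_mul_mul_same (Kp hα)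

section Overdamping

variable {α η R : Matrix (Fin N) (Fin N) ℝ} (hα : (cm α).PosDef) (hη : (cm η).PosSemidef)

theorem Om_zero : Om 0 hα hη = fromBlocks 0 (-I • (Phi hα hη)ᴴ) (I • Phi hα hη) 0 := by
  simp [Om, Omp, cm, Phi_transpose]

theorem Asys_zero (β : ℝ) :
    Asys 0 R hα hη β =
      fromBlocks (-(I * β) • Rt R hα) (-I • (Phi hα hη)ᴴ) (I • Phi hα hη) 0 := by
  rw [Asys, Om_zero, Bm, sub_eq_add_neg, ← neg_smul, fromBlocks_smul, fromBlocks_add]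
  simp

theorem re_eq_zero_or_norm_le_omegaMax (hR : (cm R).IsHermitian) (β : ℝ) {ζ : ℂ}
    (hζ : ζ ∈ spectrum ℂ (Asys 0 R hα hη β)) : ζ.re = 0 ∨ ‖ζ‖ ≤ omegaMax 0 hα hη := by
  rw [Asys_zero] at hζ
  rw [omegaMax, Om_zero]
  exact re_eq_zero_or_norm_le_opN_of_mem_spectrum _ (Rt_isHermitian hR hα) β hζ

end Overdamping

theorem lt_mul_of_div_bMin_lt {R α : Matrix (Fin N) (Fin N) ℝ} (hR : (cm R).PosSemidef)
    (hα : (cm α).PosDef) {ω β b : ℝ} (hω : 0 ≤ ω) (hβ : ω / bMin R hα < β) (hb0 : b ≠ 0)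
    (hb : (b : ℂ) ∈ spectrum ℂ (Bm R hα)) : ω < β * b := by
  set S := {r : ℝ | r ≠ 0 ∧ (r : ℂ) ∈ spectrum ℂ (Bm R hα)}
  have hS : S.Finite :=
    ((Matrix.finite_spectrum _).preimage Complex.ofReal_injective.injOn).subset fun _ hr => hr.2
  have hmin : bMin R hα ∈ S := Set.Nonempty.csInf_mem ⟨b, hb0, hb⟩ hS
  have hmin_pos := (Bm_posSemidef hR hα).pos_of_mem_spectrum hmin.1 hmin.2
  calc ω = ω / bMin R hα * bMin R hα := (div_mul_cancel₀ ω hmin_pos.ne').symm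
    _ < β * bMin R hα := mul_lt_mul_of_pos_right hβ hmin_pos
    _ ≤ β * b := mul_le_mul_of_nonneg_left (csInf_le hS.bddBelow ⟨hb0, hb⟩)
        ((div_nonneg hω hmin_pos.le).trans hβ.le)

theorem partial_overdamping_general
    {N : ℕ}
    (α η R : Matrix (Fin N) (Fin N) ℝ)
    (hα : (cm α).PosDef) (hη : (cm η).PosSemidef)
    (hR : (cm R).PosSemidef)
    (β : ℝ) (hβ : 2 * omegaMax 0 hα hη / bMin R hα < β) :
    (∀ ζ ∈ spectrum ℂ (Asys 0 R hα hη β),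
      (∃ b : ℝ, b ≠ 0 ∧ (b : ℂ) ∈ spectrum ℂ (Bm R hα) ∧
        ‖ζ + Complex.I * (β : ℂ) * (b : ℂ)‖ ≤ omegaMax 0 hα hη) →
      ζ.re = 0) ∧
    (∀ ζ ∈ spectrum ℂ (Asys 0 R hα hη β), omegaMax 0 hα hη < -ζ.im → ζ.re = 0) := by
  have hω : 0 ≤ 2 * omegaMax 0 hα hη := mul_nonneg zero_le_two (norm_nonneg _)
  refine ⟨fun ζ hζ ⟨b, hb0, hb, hdisc⟩ => ?_, fun ζ hζ him => ?_⟩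
  · refine (re_eq_zero_or_norm_le_omegaMax hα hη hR.isHermitian β hζ).resolve_right fun hle => ?_
    have hβb : β * b ≤ 2 * omegaMax 0 hα hη := calc
      β * b ≤ ‖I * β * b‖ := by simpa using le_abs_self (β * b)
      _ = ‖(ζ + I * β * b) - ζ‖ := by rw [add_sub_cancel_left]
      _ ≤ ‖ζ + I * β * b‖ + ‖ζ‖ := norm_sub_le _ _
      _ ≤ 2 * omegaMax 0 hα hη := by linarith
    exact (lt_mul_of_div_bMin_lt hR hα hω hβ hb0 hb).not_ge hβb
  · refine (re_eq_zero_or_norm_le_omegaMax hα hη hR.isHermitian β hζ).resolve_right fun hle => ?_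
    linarith [neg_le_abs ζ.im, abs_im_le_norm ζ]

/-- **Partial overdamping of the high-loss spectrum** (`θ = 0`, `rank R < N`). If
`β > 2 ω_max / b_min`, then every `ζ ∈ σ(A(β))` lying in a high-loss disc
(`|ζ + iβb| ≤ ω_max` for some nonzero eigenvalue `b` of `B`) satisfies `Re ζ = 0`;
equivalently, every `ζ ∈ σ(A(β))` with `−Im ζ > ω_max` satisfies `Re ζ = 0`. -/
theorem partial_overdamping
    {N : ℕ} (hN : 1 ≤ N)
    (α η R : Matrix (Fin N) (Fin N) ℝ)
    (hα : (cm α).PosDef) (hη : (cm η).PosSemidef)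
    (hR : (cm R).PosSemidef) (hR0 : R ≠ 0) (hrank : R.rank < N)
    (β : ℝ) (hβ : 2 * omegaMax 0 hα hη / bMin R hα < β) :
    (∀ ζ ∈ spectrum ℂ (Asys 0 R hα hη β),
      (∃ b : ℝ, b ≠ 0 ∧ (b : ℂ) ∈ spectrum ℂ (Bm R hα) ∧
        ‖ζ + Complex.I * (β : ℂ) * (b : ℂ)‖ ≤ omegaMax 0 hα hη) →
      ζ.re = 0) ∧
    (∀ ζ ∈ spectrum ℂ (Asys 0 R hα hη β), omegaMax 0 hα hη < -ζ.im → ζ.re = 0) :=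
  partial_overdamping_general α η R hα hη hR β hβ
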